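/- Let (N,v) be a TU game with veto player a and empty core. Then the least core value ε* satisfies 2ε̃ < ε* ≤ ε̃, where ε̃ = (v(N) − max{ v(S) : S proper, a ∈ S })/2 < 0. -/

import Mathlib

/-!
An allocation in the strong ε-core must give the best proper coalition `S ∋ a` at least
`max v + ε` and, since `a ∉ Sᶜ` forces `v Sᶜ = 0`, its complement at least `ε`; adding up,
`2ε ≤ v N - max v = 2ε̃`. Conversely, pay every player the same negative amount
`t = 2ε̃ / n` and the veto player the rest of `v N`: every proper coalition then has
excess at least `(n - 1) t`, which exceeds `n t = 2ε̃`. The same allocation with `t = 0`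
lies in the core as soon as `v N ≥ max v`, so an empty core forces `ε̃ < 0`.
-/

open Finset

/-- The strong ε-core of a TU game. -/
def epsCore {ι : Type*} [Fintype ι] [DecidableEq ι] (v : Finset ι → ℝ) (ε : ℝ) :
    Set (ι → ℝ) :=
  {x | (∑ i, x i) = v Finset.univ ∧
    ∀ S : Finset ι, S.Nonempty → S ≠ Finset.univ → v S + ε ≤ ∑ i ∈ S, x i}

/-- The least core value: the largest ε for which the strong ε-core is nonempty. -/
noncomputable def lcv {ι : Type*} [Fintype ι] [DecidableEq ι] (v : Finset ι → ℝ) : ℝ :=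
  sSup {ε : ℝ | (epsCore v ε).Nonempty}

/-- The set of proper coalitions containing the player `a`. -/
def Pa {ι : Type*} [Fintype ι] [DecidableEq ι] (a : ι) : Finset (Finset ι) :=
  Finset.univ.filter (fun S => a ∈ S ∧ S ≠ Finset.univ)

section

variable {ι : Type*} [Fintype ι] [DecidableEq ι]

lemma mem_Pa {a : ι} {S : Finset ι} : S ∈ Pa a ↔ a ∈ S ∧ S ≠ univ := by
  simp [Pa]

lemma add_two_mul_le_of_mem_epsCore {v : Finset ι → ℝ} {a : ι}
    (hveto : ∀ S : Finset ι, a ∉ S → v S = 0) {ε : ℝ} {x : ι → ℝ}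
    (hx : x ∈ epsCore v ε) {S : Finset ι} (hS : S ∈ Pa a) :
    v S + 2 * ε ≤ v univ := by
  obtain ⟨hxN, hxS⟩ := hx
  obtain ⟨haS, hSN⟩ := mem_Pa.1 hS
  have haSc : a ∉ Sᶜ := by simpa using haS
  have hS_le : v S + ε ≤ ∑ i ∈ S, x i := hxS S ⟨a, haS⟩ hSN
  have hSc_le : ε ≤ ∑ i ∈ Sᶜ, x i := by
    have hSc_ne : Sᶜ.Nonempty := nonempty_iff_ne_empty.2 (by simpa using hSN)
    simpa [hveto _ haSc] using hxS Sᶜ hSc_ne ((compl_ne_univ_iff_nonempty S).2 ⟨a, haS⟩)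
  linarith [sum_compl_add_sum S x]

def vetoAllocation (a : ι) (w t : ℝ) : ι → ℝ :=
  fun i => t + if i = a then w - Fintype.card ι * t else 0

lemma sum_vetoAllocation (a : ι) (w t : ℝ) (S : Finset ι) :
    ∑ i ∈ S, vetoAllocation a w t i =
      S.card * t + if a ∈ S then w - Fintype.card ι * t else 0 := by
  simp only [vetoAllocation, sum_add_distrib, sum_const, nsmul_eq_mul, sum_ite_eq']

lemma sum_univ_vetoAllocation (a : ι) (w t : ℝ) : ∑ i, vetoAllocation a w t i = w := by
  simp [sum_vetoAllocation]

lemma vetoAllocation_mem_epsCore {v : Finset ι → ℝ} {a : ι}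
    (hveto : ∀ S : Finset ι, a ∉ S → v S = 0) {t : ℝ} (ht : t ≤ 0)
    (hPa : ∀ S ∈ Pa a, v S ≤ v univ - Fintype.card ι * t) :
    vetoAllocation a (v univ) t ∈ epsCore v ((Fintype.card ι - 1) * t) := by
  refine ⟨sum_univ_vetoAllocation a _ t, fun S _ hSN => ?_⟩
  have hcard : (S.card : ℝ) + 1 ≤ Fintype.card ι := by
    exact_mod_cast (card_lt_iff_ne_univ S).2 hSN
  have hexcess : ((Fintype.card ι : ℝ) - 1) * t ≤ S.card * t := by nlinarith
  rw [sum_vetoAllocation]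
  by_cases haS : a ∈ S
  · have hvS := hPa S (mem_Pa.2 ⟨haS, hSN⟩)
    rw [if_pos haS]
    linarith
  · rw [if_neg haS, hveto S haS]
    linarith

lemma epsCore_zero_nonempty {v : Finset ι → ℝ} {a : ι}
    (hveto : ∀ S : Finset ι, a ∉ S → v S = 0) (hPa : ∀ S ∈ Pa a, v S ≤ v univ) :
    (epsCore v 0).Nonempty :=
  ⟨_, by simpa using vetoAllocation_mem_epsCore hveto le_rfl (by simpa using hPa)⟩

end

theorem stmt7_general {ι : Type*} [Fintype ι] [DecidableEq ι] (v : Finset ι → ℝ) (a : ι)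
    (hveto : ∀ S : Finset ι, a ∉ S → v S = 0)
    (hcore : ¬ (epsCore v 0).Nonempty)
    (hPa : (Pa a).Nonempty) :
    (v Finset.univ - (Pa a).sup' hPa v) / 2 < 0 ∧
    2 * ((v Finset.univ - (Pa a).sup' hPa v) / 2) < lcv v ∧
    lcv v ≤ (v Finset.univ - (Pa a).sup' hPa v) / 2 := by
  set M := (Pa a).sup' hPa v
  obtain ⟨S, hS, hSM⟩ := exists_mem_eq_sup' hPa v
  have hle_M : ∀ S ∈ Pa a, v S ≤ M := fun S hS => le_sup' v hS
  have hvM : v univ < M := by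
    by_contra! h
    exact hcore (epsCore_zero_nonempty hveto fun S hS => (hle_M S hS).trans h)
  have hub : ∀ ε ∈ {ε | (epsCore v ε).Nonempty}, ε ≤ (v univ - M) / 2 := by
    rintro ε ⟨x, hx⟩
    linarith [add_two_mul_le_of_mem_epsCore hveto hx hS]
  have hn : (0 : ℝ) < Fintype.card ι := by exact_mod_cast Fintype.card_pos_iff.2 ⟨a⟩
  set t := (v univ - M) / Fintype.card ι
  have ht : t < 0 := div_neg_of_neg_of_pos (by linarith) hn
  have hnt : Fintype.card ι * t = v univ - M := mul_div_cancel₀ _ hn.ne'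
  have hlb : ((Fintype.card ι : ℝ) - 1) * t ∈ {ε | (epsCore v ε).Nonempty} :=
    ⟨_, vetoAllocation_mem_epsCore hveto ht.le fun S hS => by linarith [hle_M S hS]⟩
  refine ⟨by linarith, ?_, csSup_le ⟨_, hlb⟩ hub⟩
  calc 2 * ((v univ - M) / 2) < ((Fintype.card ι : ℝ) - 1) * t := by linarith
    _ ≤ lcv v := le_csSup ⟨_, hub⟩ hlb

/-- For a veto game with empty core, the least core value `ε*` satisfies
`2ε̃ < ε* ≤ ε̃ < 0`, where `ε̃ = (v(N) − max{ v(S) : S proper, a ∈ S })/2`. -/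
theorem stmt7 {ι : Type*} [Fintype ι] [DecidableEq ι] (v : Finset ι → ℝ) (a : ι)
    (hcard : 2 ≤ Fintype.card ι)
    (hempty : v ∅ = 0)
    (hveto : ∀ S : Finset ι, a ∉ S → v S = 0)
    (hcore : ¬ (epsCore v 0).Nonempty)
    (hPa : (Pa a).Nonempty) :
    (v Finset.univ - (Pa a).sup' hPa v) / 2 < 0 ∧
    2 * ((v Finset.univ - (Pa a).sup' hPa v) / 2) < lcv v ∧
    lcv v ≤ (v Finset.univ - (Pa a).sup' hPa v) / 2 :=
  stmt7_general v a hveto hcore hPa
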